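/- Let α ∈ (0, √2 − 1) and let (x_n) ⊆ C, (y_n) ⊆ H, (λ_n) ⊆ (0, ∞) and (τ_n) ⊆ (0, 1] be sequences such that for all n ≥ 1: y_n = (1 + τ_n) x_n − τ_n x_{n−1}, x_{n+1} = P_C(x_n − λ_n F(y_n)), τ_n λ_n ≤ (1 + τ_{n−1}) λ_{n−1}, α/L ≤ λ_n ≤ λ̄ for some fixed λ̄ > 0, and for every z ∈ S the inequality ‖x_{n+1} − z‖² ≤ ‖x_n − z‖² − (1 − α(1+√2)) ‖x_n − y_n‖² − (1 − √2 α) ‖x_{n+1} − y_n‖² + α ‖x_n − y_{n−1}‖² − 2λ_n ⟨F(z), y_n − z⟩ holds. Then (x_n) and (y_n) converge weakly to a common point x* ∈ S. -/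

import Mathlib

/-!
For `z ∈ S` the quantity
`Φ_z(k) = ‖x_{k+1} - z‖² + α ‖x_{k+1} - y_k‖² + 2 (1 + τ_k) λ_k ⟪F z, x_k - z⟫`
is nonnegative and, by the key inequality together with `τ_{k+1} λ_{k+1} ≤ (1 + τ_k) λ_k`, drops
by at least `(1 - α (1 + √2)) (‖x_{k+1} - y_{k+1}‖² + ‖x_{k+2} - y_{k+1}‖²)` at each step.
Hence `(x_n)` is bounded, `x_n - y_n → 0`, `x_{n+1} - y_n → 0`, and
`‖x_n - z‖² + 2 (1 + τ_n) λ_n ⟪F z, x_n - z⟫` converges for every `z ∈ S`.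
The projection inequality and monotonicity of `F` show that every weak cluster point satisfies
Minty's inequality, hence lies in `S`. The extra term is nonnegative and tends to zero along any
subsequence converging weakly to its base point, so Opial's argument still shows that the weak
cluster point is unique; weak compactness of bounded sets in a Hilbert space concludes.
-/

open Filter Topology Bornology RealInnerProductSpace

theorem tendsto_zero_of_norm_sq_le {E : Type*} [NormedAddCommGroup E] {α : Type*}
    {u : α → E} {r : α → ℝ} {l : Filter α}
    (hr : Tendsto r l (𝓝 0)) (h : ∀ n, ‖u n‖ ^ 2 ≤ r n) : Tendsto u l (𝓝 0) := by
  rw [tendsto_zero_iff_norm_tendsto_zero]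
  refine squeeze_zero (fun n => norm_nonneg _) (fun n => Real.le_sqrt_of_sq_le (h n)) ?_
  simpa using hr.sqrt

theorem antitone_of_add_mul_le {Φ r : ℕ → ℝ} {c : ℝ} (hc : 0 ≤ c) (hr : ∀ k, 0 ≤ r k)
    (h : ∀ k, Φ (k + 1) + c * r k ≤ Φ k) : Antitone Φ :=
  antitone_nat_of_succ_le fun k => by nlinarith [mul_nonneg hc (hr k), h k]

theorem exists_tendsto_and_tendsto_zero_of_add_mul_le {Φ r : ℕ → ℝ} {c : ℝ} (hc : 0 < c)
    (hΦ : ∀ k, 0 ≤ Φ k) (hr : ∀ k, 0 ≤ r k) (h : ∀ k, Φ (k + 1) + c * r k ≤ Φ k) :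
    (∃ a, Tendsto Φ atTop (𝓝 a)) ∧ Tendsto r atTop (𝓝 0) := by
  obtain ⟨a, ha⟩ : ∃ a, Tendsto Φ atTop (𝓝 a) :=
    ⟨_, tendsto_atTop_ciInf (antitone_of_add_mul_le hc.le hr h) ⟨0, Set.forall_mem_range.2 hΦ⟩⟩
  refine ⟨⟨a, ha⟩, squeeze_zero hr (fun k => ?_) (g := fun k => (Φ k - Φ (k + 1)) / c) ?_⟩
  · rw [le_div_iff₀ hc]
    linarith [h k]
  · simpa using (ha.sub (ha.comp (tendsto_add_atTop_nat 1))).div_const c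

theorem isBounded_range_of_norm_sub_sq_le {E : Type*} [NormedAddCommGroup E] {x : ℕ → E}
    {Φ : ℕ → ℝ} (hΦ : Antitone Φ) {z : E} (h : ∀ k, ‖x (k + 1) - z‖ ^ 2 ≤ Φ k) :
    IsBounded (Set.range x) := by
  rw [Metric.isBounded_iff_subset_closedBall z]
  refine ⟨max ‖x 0 - z‖ √(Φ 0), ?_⟩
  rintro _ ⟨n, rfl⟩
  rw [Metric.mem_closedBall, dist_eq_norm]
  cases n with
  | zero => exact le_max_left _ _
  | succ k => exact le_max_of_le_right (Real.le_sqrt_of_sq_le ((h k).trans (hΦ k.zero_le)))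

section Weak
variable {E : Type*} [NormedAddCommGroup E] [NormedSpace ℝ E] {α : Type*}

def TendstoWeakly (u : α → E) (l : Filter α) (p : E) : Prop :=
  Tendsto (fun n => toWeakSpace ℝ E (u n)) l (𝓝 (toWeakSpace ℝ E p))

theorem tendstoWeakly_iff {u : α → E} {l : Filter α} {p : E} :
    TendstoWeakly u l p ↔ ∀ f : StrongDual ℝ E, Tendsto (fun n => f (u n)) l (𝓝 (f p)) :=
  WeakBilin.tendsto_iff_forall_eval_tendsto _ fun _ _ hab =>
    (SeparatingDual.eq_iff_forall_dual_eq (R := ℝ)).2 fun f => congrArg (fun g => g f) hab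

theorem TendstoWeakly.add_tendsto_zero {u v : α → E} {l : Filter α} {p : E}
    (hu : TendstoWeakly u l p) (hv : Tendsto v l (𝓝 0)) :
    TendstoWeakly (fun n => u n + v n) l p := by
  have := hu.add (((toWeakSpaceCLM ℝ E).continuous.tendsto 0).comp hv)
  simpa [TendstoWeakly] using this

theorem TendstoWeakly.congr_sub {u v : α → E} {l : Filter α} {p : E}
    (hu : TendstoWeakly u l p) (h : Tendsto (fun n => u n - v n) l (𝓝 0)) :
    TendstoWeakly v l p := by
  have := hu.add_tendsto_zero (v := fun n => v n - u n) (by simpa using h.neg)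
  simpa only [add_sub_cancel] using this

theorem IsClosed.mem_of_tendstoWeakly {C : Set E} (hC : IsClosed C) (hCc : Convex ℝ C)
    {u : α → E} {l : Filter α} [l.NeBot] {p : E} (hu : TendstoWeakly u l p)
    (hmem : ∀ᶠ n in l, u n ∈ C) : p ∈ C := by
  have hw : IsClosed (toWeakSpace ℝ E '' C) := by
    rw [← closure_eq_iff_isClosed, ← hCc.toWeakSpace_closure ℝ, hC.closure_eq]
  obtain ⟨q, hq, hqp⟩ := hw.mem_of_tendsto hu (hmem.mono fun n hn => Set.mem_image_of_mem _ hn)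
  rwa [← (toWeakSpace ℝ E).injective hqp]

end Weak

section Hilbert
variable {H : Type*} [NormedAddCommGroup H] [InnerProductSpace ℝ H] {α : Type*}

theorem TendstoWeakly.tendsto_inner {u : α → H} {l : Filter α} {p : H}
    (hu : TendstoWeakly u l p) (v : H) : Tendsto (fun n => ⟪v, u n⟫) l (𝓝 ⟪v, p⟫) :=
  tendstoWeakly_iff.1 hu (innerSL ℝ v)

theorem InnerProductSpace.inclusionInDoubleDual_surjective [CompleteSpace H] :
    Function.Surjective (NormedSpace.inclusionInDoubleDual ℝ H) := by
  intro φ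
  refine ⟨(InnerProductSpace.toDual ℝ H).symm (φ.comp (innerSL ℝ)), ?_⟩
  ext f
  obtain ⟨v, rfl⟩ := (InnerProductSpace.toDual ℝ H).surjective f
  rw [NormedSpace.dual_def, InnerProductSpace.toDual_apply_apply, real_inner_comm,
    InnerProductSpace.toDual_symm_apply]
  rfl

theorem Bornology.IsBounded.isCompact_closure_toWeakSpace [CompleteSpace H] {s : Set H}
    (hs : IsBounded s) : IsCompact (closure (toWeakSpace ℝ H '' s)) := by
  refine NormedSpace.isCompact_closure_of_isBounded ℝ H _ ?_ fun φ _ => ?_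
  · rwa [Set.preimage_image_eq _ (toWeakSpace ℝ H).injective]
  · exact InnerProductSpace.inclusionInDoubleDual_surjective φ

theorem tendsto_inner_zero_of_isBounded {a b : α → H} {l : Filter α}
    (ha : IsBounded (Set.range a)) (hb : Tendsto b l (𝓝 0)) :
    Tendsto (fun n => ⟪a n, b n⟫) l (𝓝 0) := by
  obtain ⟨M, hM⟩ := ha.exists_norm_le
  refine squeeze_zero_norm (fun n => (norm_inner_le_norm _ _).trans
    (mul_le_mul_of_nonneg_right (hM _ ⟨n, rfl⟩) (norm_nonneg _))) ?_
  simpa using (tendsto_norm_zero.comp hb).const_mul M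

theorem tendsto_norm_sub_sq_succ_sub {u : ℕ → H} (hu : IsBounded (Set.range u))
    (hdiff : Tendsto (fun n => u (n + 1) - u n) atTop (𝓝 0)) (z : H) :
    Tendsto (fun n => ‖u (n + 1) - z‖ ^ 2 - ‖u n - z‖ ^ 2) atTop (𝓝 0) := by
  obtain ⟨M, hM⟩ := hu.exists_norm_le
  have hsum : IsBounded (Set.range fun n => u (n + 1) - z + (u n - z)) := by
    refine isBounded_iff_forall_norm_le.2 ⟨M + M + (‖z‖ + ‖z‖), ?_⟩
    rintro _ ⟨n, rfl⟩
    have := hM _ ⟨n + 1, rfl⟩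
    have := hM _ ⟨n, rfl⟩
    calc _ ≤ ‖u (n + 1) - z‖ + ‖u n - z‖ := norm_add_le _ _
      _ ≤ (‖u (n + 1)‖ + ‖z‖) + (‖u n‖ + ‖z‖) := add_le_add (norm_sub_le _ _) (norm_sub_le _ _)
      _ ≤ _ := by linarith
  have hdiff_sq : ∀ a b : H, ⟪a + b, a - b⟫ = ‖a‖ ^ 2 - ‖b‖ ^ 2 := fun a b => by
    rw [inner_add_left, inner_sub_right, inner_sub_right, real_inner_self_eq_norm_sq,
      real_inner_self_eq_norm_sq, real_inner_comm a b]
    ring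
  refine (tendsto_inner_zero_of_isBounded hsum hdiff).congr fun n => ?_
  rw [← hdiff_sq, sub_sub_sub_cancel_right]

theorem add_sq_norm_sub_le_of_tendstoWeakly {x : α → H} {b : H → α → ℝ} {l : Filter α}
    [l.NeBot] {p q : H} {ap aq : ℝ} (hp : TendstoWeakly x l p) (hbp : Tendsto (b p) l (𝓝 0))
    (hbq : ∀ᶠ n in l, 0 ≤ b q n)
    (hap : Tendsto (fun n => ‖x n - p‖ ^ 2 + b p n) l (𝓝 ap))
    (haq : Tendsto (fun n => ‖x n - q‖ ^ 2 + b q n) l (𝓝 aq)) :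
    ap + ‖p - q‖ ^ 2 ≤ aq := by
  have hinner : Tendsto (fun n => ⟪p - q, x n - p⟫) l (𝓝 0) := by
    simpa [inner_sub_right] using (hp.tendsto_inner (p - q)).sub_const ⟪p - q, p⟫
  have hlow : Tendsto (fun n => ‖x n - p‖ ^ 2 + b p n + ‖p - q‖ ^ 2 + 2 * ⟪p - q, x n - p⟫
      - b p n) l (𝓝 (ap + ‖p - q‖ ^ 2 + 2 * 0 - 0)) :=
    (((hap.add_const _).add (hinner.const_mul 2)).sub hbp)
  refine le_of_tendsto_of_tendsto (by simpa using hlow) haq (hbq.mono fun n hn => ?_)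
  have hsplit : x n - q = (x n - p) + (p - q) := by abel
  beta_reduce
  rw [hsplit, norm_add_sq_real, real_inner_comm]
  linarith

theorem exists_tendstoWeakly_of_opial [CompleteSpace H] {x : ℕ → H} {S : Set H}
    {b : H → ℕ → ℝ} (hx : IsBounded (Set.range x)) (hb : ∀ z ∈ S, ∀ n, 0 ≤ b z n)
    (hconv : ∀ z ∈ S, ∃ a, Tendsto (fun n => ‖x n - z‖ ^ 2 + b z n) atTop (𝓝 a))
    (hS : ∀ (l : Filter ℕ) [l.NeBot] (p : H), l ≤ atTop → TendstoWeakly x l p → p ∈ S)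
    (hb₀ : ∀ (l : Filter ℕ) (p : H), l ≤ atTop → p ∈ S → TendstoWeakly x l p →
      Tendsto (b p) l (𝓝 0)) :
    ∃ p ∈ S, TendstoWeakly x atTop p := by
  have hclust : ∀ q, MapClusterPt q atTop (fun n => toWeakSpace ℝ H (x n)) →
      ∃ U : Ultrafilter ℕ, (U : Filter ℕ) ≤ atTop ∧
        TendstoWeakly x (U : Filter ℕ) ((toWeakSpace ℝ H).symm q) := by
    intro q hq
    simpa [TendstoWeakly] using mapClusterPt_iff_ultrafilter.1 hq
  have huniq : ∀ (l₁ l₂ : Filter ℕ) [l₁.NeBot] [l₂.NeBot] (p q : H), l₁ ≤ atTop → l₂ ≤ atTop →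
      TendstoWeakly x l₁ p → TendstoWeakly x l₂ q → p = q := by
    intro l₁ l₂ _ _ p q h₁ h₂ hp hq
    have hpS := hS l₁ p h₁ hp
    have hqS := hS l₂ q h₂ hq
    obtain ⟨ap, hap⟩ := hconv p hpS
    obtain ⟨aq, haq⟩ := hconv q hqS
    have e₁ := add_sq_norm_sub_le_of_tendstoWeakly hp (hb₀ l₁ p h₁ hpS hp)
      (.of_forall (hb q hqS)) (hap.mono_left h₁) (haq.mono_left h₁)
    have e₂ := add_sq_norm_sub_le_of_tendstoWeakly hq (hb₀ l₂ q h₂ hqS hq)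
      (.of_forall (hb p hpS)) (haq.mono_left h₂) (hap.mono_left h₂)
    rw [norm_sub_rev] at e₂
    have : ‖p - q‖ ^ 2 ≤ 0 := by linarith
    simpa [sub_eq_zero] using this
  have hK := hx.isCompact_closure_toWeakSpace
  have hxK : ∀ᶠ n in atTop, toWeakSpace ℝ H (x n) ∈ closure (toWeakSpace ℝ H '' Set.range x) :=
    .of_forall fun n => subset_closure ⟨x n, Set.mem_range_self n, rfl⟩
  obtain ⟨q₀, -, hq₀⟩ := hK.exists_mapClusterPt (le_principal_iff.2 hxK)
  obtain ⟨U₀, hU₀, hp₀⟩ := hclust q₀ hq₀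
  refine ⟨_, hS (U₀ : Filter ℕ) _ hU₀ hp₀,
    hK.tendsto_nhds_of_unique_mapClusterPt hxK fun q _ hq => ?_⟩
  obtain ⟨U, hU, hp⟩ := hclust q hq
  exact (toWeakSpace ℝ H).symm.injective (huniq (U : Filter ℕ) U₀ _ _ hU hU₀ hp hp₀)

end Hilbert

section VariationalInequality
variable {H : Type*} [NormedAddCommGroup H] [InnerProductSpace ℝ H]

def VISolutions (C : Set H) (F : H → H) : Set H := {z ∈ C | ∀ w ∈ C, 0 ≤ ⟪F z, w - z⟫}

theorem Convex.mem_viSolutions_of_minty {C : Set H} (hC : Convex ℝ C) {F : H → H}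
    (hF : ContinuousOn F C) {p : H} (hp : p ∈ C) (h : ∀ w ∈ C, 0 ≤ ⟪F w, w - p⟫) :
    p ∈ VISolutions C F := by
  refine ⟨hp, fun w hw => ?_⟩
  have hseg : ∀ t ∈ Set.Ioc (0 : ℝ) 1, p + t • (w - p) ∈ C := fun t ht =>
    hC.add_smul_sub_mem hp hw ⟨ht.1.le, ht.2⟩
  have hev : ∀ᶠ t in 𝓝[>] (0 : ℝ), t ∈ Set.Ioc (0 : ℝ) 1 := Ioc_mem_nhdsGT one_pos
  have hlim : Tendsto (fun t : ℝ => p + t • (w - p)) (𝓝[>] 0) (𝓝[C] p) := by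
    refine tendsto_nhdsWithin_iff.2 ⟨?_, hev.mono hseg⟩
    exact (Continuous.tendsto' (by fun_prop) 0 p (by simp)).mono_left nhdsWithin_le_nhds
  refine ge_of_tendsto (((hF p hp).tendsto.comp hlim).inner tendsto_const_nhds)
    (hev.mono fun t ht => ?_)
  have := h _ (hseg t ht)
  rw [add_sub_cancel_left, real_inner_smul_right] at this
  exact nonneg_of_mul_nonneg_right this ht.1

theorem inner_le_of_projection_step {F : H → H} {u v y w : H} {t : ℝ} (ht : 0 < t)
    (hproj : 0 ≤ ⟪v - (u - t • F y), w - v⟫) (hmono : 0 ≤ ⟪F w - F y, w - y⟫) :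
    ⟪F y, v - y⟫ + t⁻¹ * ⟪u - v, w - v⟫ ≤ ⟪F w, w - y⟫ := by
  have hstep : t⁻¹ * ⟪u - v, w - v⟫ ≤ ⟪F y, w - v⟫ := by
    rw [inv_mul_le_iff₀ ht]
    have : v - (u - t • F y) = -(u - v) + t • F y := by abel
    rw [this, inner_add_left, inner_neg_left, real_inner_smul_left] at hproj
    linarith
  have hsplit : ⟪F y, w - y⟫ = ⟪F y, v - y⟫ + ⟪F y, w - v⟫ := by
    rw [← inner_add_right, sub_add_sub_cancel']
  rw [inner_sub_left] at hmono
  linarith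

end VariationalInequality

namespace ProjectedReflectedGradient
variable {H : Type*} [NormedAddCommGroup H] [InnerProductSpace ℝ H]
  {C : Set H} {F : H → H} {x y : ℕ → H} {lam τ : ℕ → ℝ} {α : ℝ}

def weightedGap (F : H → H) (lam τ : ℕ → ℝ) (x : ℕ → H) (z : H) (k : ℕ) : ℝ :=
  2 * (1 + τ k) * lam k * ⟪F z, x k - z⟫

def energy (F : H → H) (lam τ : ℕ → ℝ) (α : ℝ) (x y : ℕ → H) (z : H) (k : ℕ) : ℝ :=
  ‖x (k + 1) - z‖ ^ 2 + α * ‖x (k + 1) - y k‖ ^ 2 + weightedGap F lam τ x z k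

theorem weightedGap_nonneg (hxC : ∀ n, x n ∈ C) (hlam : ∀ n, 0 < lam n) (hτ : ∀ n, 0 ≤ τ n)
    {z : H} (hz : z ∈ VISolutions C F) (k : ℕ) : 0 ≤ weightedGap F lam τ x z k :=
  mul_nonneg (by nlinarith [hlam k, hτ k]) (hz.2 _ (hxC k))

theorem norm_sub_sq_le_energy (hxC : ∀ n, x n ∈ C) (hlam : ∀ n, 0 < lam n) (hτ : ∀ n, 0 ≤ τ n)
    (hα : 0 ≤ α) {z : H} (hz : z ∈ VISolutions C F) (k : ℕ) :
    ‖x (k + 1) - z‖ ^ 2 ≤ energy F lam τ α x y z k := by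
  have := weightedGap_nonneg hxC hlam hτ hz k
  unfold energy
  nlinarith [sq_nonneg ‖x (k + 1) - y k‖]

theorem energy_succ_add_le (hxC : ∀ n, x n ∈ C)
    (hyrec : ∀ n : ℕ, 1 ≤ n → y n = (1 + τ n) • x n - τ n • x (n - 1))
    (hlamrec : ∀ n : ℕ, 1 ≤ n → τ n * lam n ≤ (1 + τ (n - 1)) * lam (n - 1))
    (hkey : ∀ n : ℕ, 1 ≤ n → ∀ z : H, z ∈ C → (∀ w ∈ C, 0 ≤ ⟪F z, w - z⟫) →
      ‖x (n + 1) - z‖ ^ 2 ≤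
        ‖x n - z‖ ^ 2 - (1 - α * (1 + Real.sqrt 2)) * ‖x n - y n‖ ^ 2
          - (1 - Real.sqrt 2 * α) * ‖x (n + 1) - y n‖ ^ 2
          + α * ‖x n - y (n - 1)‖ ^ 2 - 2 * lam n * ⟪F z, y n - z⟫)
    {z : H} (hz : z ∈ VISolutions C F) (k : ℕ) :
    energy F lam τ α x y z (k + 1) + (1 - α * (1 + Real.sqrt 2)) *
      (‖x (k + 1) - y (k + 1)‖ ^ 2 + ‖x (k + 2) - y (k + 1)‖ ^ 2) ≤
      energy F lam τ α x y z k := by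
  have hkey := hkey (k + 1) le_add_self z hz.1 hz.2
  have hlamrec := hlamrec (k + 1) le_add_self
  have hyrec := hyrec (k + 1) le_add_self
  simp only [add_tsub_cancel_right] at hkey hlamrec hyrec
  have hy : y (k + 1) - z = (1 + τ (k + 1)) • (x (k + 1) - z) - τ (k + 1) • (x k - z) := by
    rw [hyrec]; module
  rw [hy, inner_sub_right, real_inner_smul_right, real_inner_smul_right] at hkey
  have hgap := hz.2 _ (hxC k)
  unfold energy weightedGap
  nlinarith [mul_le_mul_of_nonneg_right hlamrec hgap]

theorem tendsto_residuals_of_energy {c : ℝ} (hc : 0 < c) {z : H}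
    (hΦ : ∀ k, ‖x (k + 1) - z‖ ^ 2 ≤ energy F lam τ α x y z k)
    (hdesc : ∀ k, energy F lam τ α x y z (k + 1) +
      c * (‖x (k + 1) - y (k + 1)‖ ^ 2 + ‖x (k + 2) - y (k + 1)‖ ^ 2) ≤
      energy F lam τ α x y z k) :
    Tendsto (fun n => x n - y n) atTop (𝓝 0) ∧
      Tendsto (fun n => x (n + 1) - y n) atTop (𝓝 0) := by
  have hr := (exists_tendsto_and_tendsto_zero_of_add_mul_le hc
    (fun k => (sq_nonneg _).trans (hΦ k)) (fun k => by positivity) hdesc).2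
  exact ⟨(tendsto_add_atTop_iff_nat 1).1 (tendsto_zero_of_norm_sq_le hr fun k =>
      le_add_of_nonneg_right (sq_nonneg _)),
    (tendsto_add_atTop_iff_nat 1).1 (tendsto_zero_of_norm_sq_le hr fun k =>
      le_add_of_nonneg_left (sq_nonneg _))⟩

theorem tendsto_weightedGap_zero (hτ : ∀ n, τ n ∈ Set.Ioc (0 : ℝ) 1) (hlam : ∀ n, 0 < lam n)
    {M : ℝ} (hM : ∀ᶠ n in atTop, lam n ≤ M) {l : Filter ℕ} (hl : l ≤ atTop) {p : H}
    (hp : TendstoWeakly x l p) : Tendsto (weightedGap F lam τ x p) l (𝓝 0) := by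
  have hinner : Tendsto (fun n => ⟪F p, x n - p⟫) l (𝓝 0) := by
    simpa [inner_sub_right] using (hp.tendsto_inner (F p)).sub_const ⟪F p, p⟫
  refine isBoundedUnder_le_mul_tendsto_zero
    (isBoundedUnder_of_eventually_le (a := 4 * M) ((hM.filter_mono hl).mono fun n hn => ?_)) hinner
  obtain ⟨hτ₀, hτ₁⟩ := hτ n
  have := hlam n
  rw [Function.comp_apply, Real.norm_eq_abs, abs_of_nonneg (by positivity)]
  nlinarith

theorem exists_tendsto_norm_sub_sq_add_weightedGap {c : ℝ} (hc : 0 < c)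
    (hx : IsBounded (Set.range x)) (hxy : Tendsto (fun n => x n - y n) atTop (𝓝 0))
    (hxy' : Tendsto (fun n => x (n + 1) - y n) atTop (𝓝 0)) {z : H}
    (hΦ : ∀ k, ‖x (k + 1) - z‖ ^ 2 ≤ energy F lam τ α x y z k)
    (hdesc : ∀ k, energy F lam τ α x y z (k + 1) +
      c * (‖x (k + 1) - y (k + 1)‖ ^ 2 + ‖x (k + 2) - y (k + 1)‖ ^ 2) ≤
      energy F lam τ α x y z k) :
    ∃ a, Tendsto (fun n => ‖x n - z‖ ^ 2 + weightedGap F lam τ x z n) atTop (𝓝 a) := by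
  obtain ⟨a, ha⟩ := (exists_tendsto_and_tendsto_zero_of_add_mul_le hc
    (fun k => (sq_nonneg _).trans (hΦ k)) (fun k => by positivity) hdesc).1
  have hxx : Tendsto (fun n => x (n + 1) - x n) atTop (𝓝 0) := by
    simpa using hxy'.sub hxy
  have hres : Tendsto (fun n => α * ‖x (n + 1) - y n‖ ^ 2) atTop (𝓝 0) := by
    simpa using ((continuous_norm.tendsto 0).comp hxy').pow 2 |>.const_mul α
  have hlim := (ha.sub (tendsto_norm_sub_sq_succ_sub hx hxx z)).sub hres
  rw [sub_zero, sub_zero] at hlim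
  exact ⟨a, hlim.congr fun n => by
    unfold energy
    ring⟩

theorem mem_viSolutions_of_tendstoWeakly {P : H → H} (hCclosed : IsClosed C)
    (hCconv : Convex ℝ C) (hPchar : ∀ u : H, ∀ y ∈ C, 0 ≤ ⟪P u - u, y - P u⟫)
    (hmono : ∀ x y : H, 0 ≤ ⟪F x - F y, x - y⟫) {K : NNReal} (hF : LipschitzWith K F)
    (hxC : ∀ n, x n ∈ C) (hxrec : ∀ n : ℕ, 1 ≤ n → x (n + 1) = P (x n - lam n • F (y n)))
    {c : ℝ} (hc : 0 < c) (hlam : ∀ᶠ n in atTop, c ≤ lam n ∧ 1 ≤ n)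
    (hx : IsBounded (Set.range x)) (hxy : Tendsto (fun n => x n - y n) atTop (𝓝 0))
    (hxy' : Tendsto (fun n => x (n + 1) - y n) atTop (𝓝 0)) {l : Filter ℕ} [l.NeBot]
    (hl : l ≤ atTop) {p : H} (hp : TendstoWeakly x l p) : p ∈ VISolutions C F := by
  have hpC : p ∈ C := hCclosed.mem_of_tendstoWeakly hCconv hp (.of_forall hxC)
  have hyp : TendstoWeakly y l p := hp.congr_sub (hxy.mono_left hl)
  have hy : IsBounded (Set.range y) := by
    refine (isBounded_sub hx (Metric.isBounded_range_of_tendsto _ hxy)).subset ?_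
    rintro _ ⟨n, rfl⟩
    exact ⟨x n, ⟨n, rfl⟩, x n - y n, ⟨n, rfl⟩, sub_sub_cancel _ _⟩
  have hFy : IsBounded (Set.range fun n => F (y n)) := by
    rw [← Function.comp_def, Set.range_comp]
    exact hF.isBounded_image hy
  refine hCconv.mem_viSolutions_of_minty hF.continuous.continuousOn hpC fun w hw => ?_
  have hwx : IsBounded (Set.range fun n => w - x (n + 1)) := by
    refine (isBounded_sub (isBounded_singleton (x := w)) hx).subset ?_
    rintro _ ⟨n, rfl⟩
    exact Set.sub_mem_sub rfl ⟨n + 1, rfl⟩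
  have hlow : ∀ᶠ n in atTop, ⟪F (y n), x (n + 1) - y n⟫ +
      (lam n)⁻¹ * ⟪x n - x (n + 1), w - x (n + 1)⟫ ≤ ⟪F w, w - y n⟫ := by
    refine hlam.mono fun n hn => inner_le_of_projection_step (hc.trans_le hn.1) ?_ (hmono w (y n))
    rw [hxrec n hn.2]
    exact hPchar _ w hw
  have hlow₀ : Tendsto (fun n => ⟪F (y n), x (n + 1) - y n⟫ +
      (lam n)⁻¹ * ⟪x n - x (n + 1), w - x (n + 1)⟫) atTop (𝓝 0) := by
    have hinv : IsBoundedUnder (· ≤ ·) atTop (norm ∘ fun n => (lam n)⁻¹) :=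
      isBoundedUnder_of_eventually_le (a := c⁻¹) (hlam.mono fun n hn => by
        rw [Function.comp_apply, norm_inv, Real.norm_of_nonneg (hc.le.trans hn.1)]
        exact inv_anti₀ hc hn.1)
    have hxx : Tendsto (fun n => x n - x (n + 1)) atTop (𝓝 0) := by simpa using hxy.sub hxy'
    have h₂ := isBoundedUnder_le_mul_tendsto_zero hinv (tendsto_inner_zero_of_isBounded hwx hxx)
    simpa [real_inner_comm] using (tendsto_inner_zero_of_isBounded hFy hxy').add h₂
  have hup : Tendsto (fun n => ⟪F w, w - y n⟫) l (𝓝 ⟪F w, w - p⟫) := by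
    simpa [inner_sub_right] using (hyp.tendsto_inner (F w)).const_sub ⟪F w, w⟫
  exact le_of_tendsto_of_tendsto (hlow₀.mono_left hl) hup (hlow.filter_mono hl)

end ProjectedReflectedGradient

open ProjectedReflectedGradient

theorem weak_convergence_of_modified_algorithm_general
    {H : Type*} [NormedAddCommGroup H] [InnerProductSpace ℝ H] [CompleteSpace H]
    (C : Set H) (hCclosed : IsClosed C) (hCconv : Convex ℝ C)
    (P : H → H)
    (hPchar : ∀ u : H, ∀ y ∈ C, 0 ≤ ⟪P u - u, y - P u⟫)
    (F : H → H)
    (hmono : ∀ x y : H, 0 ≤ ⟪F x - F y, x - y⟫)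
    (L : ℝ) (hL : 0 < L)
    (hlip : ∀ x y : H, ‖F x - F y‖ ≤ L * ‖x - y‖)
    (hS : ∃ z ∈ C, ∀ w ∈ C, 0 ≤ ⟪F z, w - z⟫)
    (α : ℝ) (hα : α ∈ Set.Ioo (0 : ℝ) (Real.sqrt 2 - 1))
    (lamBar : ℝ)
    (x y : ℕ → H) (lam : ℕ → ℝ) (τ : ℕ → ℝ)
    (hxC : ∀ n, x n ∈ C)
    (hlampos : ∀ n, 0 < lam n)
    (hτ : ∀ n, τ n ∈ Set.Ioc (0 : ℝ) 1)
    (hyrec : ∀ n : ℕ, 1 ≤ n → y n = (1 + τ n) • x n - τ n • x (n - 1))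
    (hxrec : ∀ n : ℕ, 1 ≤ n → x (n + 1) = P (x n - lam n • F (y n)))
    (hlamrec : ∀ n : ℕ, 1 ≤ n → τ n * lam n ≤ (1 + τ (n - 1)) * lam (n - 1))
    (hlambds : ∀ n : ℕ, 1 ≤ n → α / L ≤ lam n ∧ lam n ≤ lamBar)
    (hkey : ∀ n : ℕ, 1 ≤ n → ∀ z : H, z ∈ C → (∀ w ∈ C, 0 ≤ ⟪F z, w - z⟫) →
      ‖x (n + 1) - z‖ ^ 2 ≤
        ‖x n - z‖ ^ 2 - (1 - α * (1 + Real.sqrt 2)) * ‖x n - y n‖ ^ 2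
          - (1 - Real.sqrt 2 * α) * ‖x (n + 1) - y n‖ ^ 2
          + α * ‖x n - y (n - 1)‖ ^ 2 - 2 * lam n * ⟪F z, y n - z⟫) :
    ∃ xstar : H, xstar ∈ C ∧ (∀ w ∈ C, 0 ≤ ⟪F xstar, w - xstar⟫) ∧
      (∀ f : H →L[ℝ] ℝ,
        Filter.Tendsto (fun n : ℕ => f (x n)) Filter.atTop (nhds (f xstar))) ∧
      (∀ f : H →L[ℝ] ℝ,
        Filter.Tendsto (fun n : ℕ => f (y n)) Filter.atTop (nhds (f xstar))) := by
  obtain ⟨z₀, hz₀⟩ : (VISolutions C F).Nonempty := hS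
  have hc : 0 < 1 - α * (1 + √2) := by
    nlinarith [hα.1, hα.2, Real.sq_sqrt (zero_le_two (α := ℝ)), Real.sqrt_nonneg 2]
  have hτ₀ : ∀ n, 0 ≤ τ n := fun n => (hτ n).1.le
  have hlam : ∀ᶠ n in atTop, (α / L ≤ lam n ∧ 1 ≤ n) ∧ lam n ≤ lamBar :=
    eventually_atTop.2 ⟨1, fun n hn => ⟨⟨(hlambds n hn).1, hn⟩, (hlambds n hn).2⟩⟩
  have hF : LipschitzWith L.toNNReal F := LipschitzWith.of_dist_le_mul fun u v => by
    simpa [dist_eq_norm, hL.le] using hlip u v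
  have hΦ := fun z (hz : z ∈ VISolutions C F) =>
    norm_sub_sq_le_energy (y := y) hxC hlampos hτ₀ hα.1.le hz
  have hdesc := fun z (hz : z ∈ VISolutions C F) =>
    energy_succ_add_le hxC hyrec hlamrec hkey hz
  obtain ⟨hxy, hxy'⟩ := tendsto_residuals_of_energy hc (hΦ z₀ hz₀) (hdesc z₀ hz₀)
  have hx := isBounded_range_of_norm_sub_sq_le
    (antitone_of_add_mul_le hc.le (fun k => by positivity) (hdesc z₀ hz₀)) (hΦ z₀ hz₀)
  obtain ⟨p, hpS, hp⟩ := exists_tendstoWeakly_of_opial hx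
    (fun z hz => weightedGap_nonneg hxC hlampos hτ₀ hz)
    (fun z hz => exists_tendsto_norm_sub_sq_add_weightedGap hc hx hxy hxy' (hΦ z hz) (hdesc z hz))
    (fun l _ p hl hp => mem_viSolutions_of_tendstoWeakly hCclosed hCconv hPchar hmono hF hxC
      hxrec (div_pos hα.1 hL) (hlam.mono fun n hn => hn.1) hx hxy hxy' hl hp)
    (fun l p hl _ hp => tendsto_weightedGap_zero hτ hlampos (hlam.mono fun n hn => hn.2) hl hp)
  exact ⟨p, hpS.1, hpS.2, tendstoWeakly_iff.1 hp, tendstoWeakly_iff.1 (hp.congr_sub hxy)⟩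

/-- Theorem 4.6: weak convergence of the nonstationary projected reflected gradient
algorithm. -/
theorem weak_convergence_of_modified_algorithm
    {H : Type*} [NormedAddCommGroup H] [InnerProductSpace ℝ H] [CompleteSpace H]
    (C : Set H) (hC : C.Nonempty) (hCclosed : IsClosed C) (hCconv : Convex ℝ C)
    (P : H → H)
    (hPmem : ∀ u : H, P u ∈ C)
    (hPchar : ∀ u : H, ∀ y ∈ C, 0 ≤ ⟪P u - u, y - P u⟫)
    (F : H → H)
    (hmono : ∀ x y : H, 0 ≤ ⟪F x - F y, x - y⟫)
    (L : ℝ) (hL : 0 < L)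
    (hlip : ∀ x y : H, ‖F x - F y‖ ≤ L * ‖x - y‖)
    (hS : ∃ z ∈ C, ∀ w ∈ C, 0 ≤ ⟪F z, w - z⟫)
    (α : ℝ) (hα : α ∈ Set.Ioo (0 : ℝ) (Real.sqrt 2 - 1))
    (lamBar : ℝ) (hlamBar : 0 < lamBar)
    (x y : ℕ → H) (lam : ℕ → ℝ) (τ : ℕ → ℝ)
    (hxC : ∀ n, x n ∈ C)
    (hlampos : ∀ n, 0 < lam n)
    (hτ : ∀ n, τ n ∈ Set.Ioc (0 : ℝ) 1)
    (hyrec : ∀ n : ℕ, 1 ≤ n → y n = (1 + τ n) • x n - τ n • x (n - 1))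
    (hxrec : ∀ n : ℕ, 1 ≤ n → x (n + 1) = P (x n - lam n • F (y n)))
    (hlamrec : ∀ n : ℕ, 1 ≤ n → τ n * lam n ≤ (1 + τ (n - 1)) * lam (n - 1))
    (hlambds : ∀ n : ℕ, 1 ≤ n → α / L ≤ lam n ∧ lam n ≤ lamBar)
    (hkey : ∀ n : ℕ, 1 ≤ n → ∀ z : H, z ∈ C → (∀ w ∈ C, 0 ≤ ⟪F z, w - z⟫) →
      ‖x (n + 1) - z‖ ^ 2 ≤
        ‖x n - z‖ ^ 2 - (1 - α * (1 + Real.sqrt 2)) * ‖x n - y n‖ ^ 2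
          - (1 - Real.sqrt 2 * α) * ‖x (n + 1) - y n‖ ^ 2
          + α * ‖x n - y (n - 1)‖ ^ 2 - 2 * lam n * ⟪F z, y n - z⟫) :
    ∃ xstar : H, xstar ∈ C ∧ (∀ w ∈ C, 0 ≤ ⟪F xstar, w - xstar⟫) ∧
      (∀ f : H →L[ℝ] ℝ,
        Filter.Tendsto (fun n : ℕ => f (x n)) Filter.atTop (nhds (f xstar))) ∧
      (∀ f : H →L[ℝ] ℝ,
        Filter.Tendsto (fun n : ℕ => f (y n)) Filter.atTop (nhds (f xstar))) :=
  weak_convergence_of_modified_algorithm_general C hCclosed hCconv P hPchar F hmono L hL hlip hS α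
    hα lamBar x y lam τ hxC hlampos hτ hyrec hxrec hlamrec hlambds hkey
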